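/- Let a, b, c be the tree automorphisms of the binary tree defined by the wreath recursions a = σ(c,b), b = (c,b), c = (c,a) (automaton number 942). Then the subgroup generated by a and b is isomorphic to the lamplighter group C₂ ≀ ℤ; in particular, the group G₉₄₂ generated by a, b, c contains the lamplighter group as a subgroup. -/

import Mathlib

/-- An invertible automaton over the two-letter alphabet `Bool`:
a set of states `Q`, a transition map and an output map such that each state
acts on the alphabet by a permutation. -/
structure BinAutomaton (Q : Type*) where
  trans : Q → Bool → Q
  out : Q → Bool → Bool
  out_bij : ∀ q, Function.Bijective (out q)

namespace BinAutomaton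

variable {Q : Type*} (A : BinAutomaton Q)

/-- The action of a state on finite binary words:
`q(xw) = ρ(q,x) · (τ(q,x))(w)`. -/
def act : Q → List Bool → List Bool
  | _, [] => []
  | q, x :: w => A.out q x :: act (A.trans q x) w

theorem act_injective (q : Q) : Function.Injective (A.act q) := by
  intro u
  induction u generalizing q with
  | nil =>
    intro v h
    cases v with
    | nil => rfl
    | cons y v => simp [act] at h
  | cons x u ih =>
    intro v h
    cases v with
    | nil => simp [act] at h
    | cons y v =>
      simp only [act, List.cons.injEq] at h
      obtain ⟨h1, h2⟩ := h
      obtain rfl : x = y := (A.out_bij q).1 h1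
      rw [ih _ h2]

theorem act_surjective (q : Q) : Function.Surjective (A.act q) := by
  intro v
  induction v generalizing q with
  | nil => exact ⟨[], rfl⟩
  | cons y v ih =>
    obtain ⟨x, hx⟩ := (A.out_bij q).2 y
    obtain ⟨w, hw⟩ := ih (A.trans q x)
    exact ⟨x :: w, by simp [act, hx, hw]⟩

/-- The tree automorphism defined by the state `q`. -/
noncomputable def perm (q : Q) : Equiv.Perm (List Bool) :=
  Equiv.ofBijective (A.act q) ⟨A.act_injective q, A.act_surjective q⟩

/-- The group generated by the automaton: the subgroup of the group of
bijections of the binary tree generated by the states. -/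
noncomputable def autGroup : Subgroup (Equiv.Perm (List Bool)) :=
  Subgroup.closure (Set.range A.perm)

end BinAutomaton

/-- Helper constructing a 3-state automaton from the sections at `0`, the
sections at `1`, and the activity of each state. -/
def mkAut3 (t0 t1 : Fin 3 → Fin 3) (actv : Fin 3 → Bool) : BinAutomaton (Fin 3) where
  trans q x := cond x (t1 q) (t0 q)
  out q x := xor (actv q) x
  out_bij q := by
    have h : ∀ b : Bool, Function.Bijective fun x => xor b x := by decide
    exact h (actv q)

/-- The base group of the lamplighter group: the direct sum `⨁_{i ∈ ℤ} ℤ/2ℤ`,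
written multiplicatively. -/
abbrev LampBase : Type := Multiplicative (ℤ →₀ ZMod 2)

/-- The shift action of `ℤ` on `⨁_{i ∈ ℤ} ℤ/2ℤ`. -/
noncomputable def lampShift : Multiplicative ℤ →* MulAut LampBase :=
  MonoidHom.mk'
    (fun n => AddEquiv.toMultiplicative
      (Finsupp.domCongr (M := ZMod 2) (Equiv.addRight n.toAdd)))
    (by
      intro m n
      refine DFunLike.ext _ _ fun f => ?_
      show (Finsupp.equivMapDomain (Equiv.addRight ((m * n).toAdd)) f.toAdd : ℤ →₀ ZMod 2)
          = Finsupp.equivMapDomain (Equiv.addRight m.toAdd)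
              (Finsupp.equivMapDomain (Equiv.addRight n.toAdd) f.toAdd)
      ext i
      simp only [Finsupp.equivMapDomain_apply, Equiv.addRight_symm_apply, toAdd_mul]
      congr 1
      ring)

/-- The lamplighter group `C₂ ≀ ℤ`, as the semidirect product
`(⨁_{i ∈ ℤ} ℤ/2ℤ) ⋊ ℤ` where `ℤ` acts by shifting the coordinates. -/
abbrev Lamplighter : Type :=
  SemidirectProduct LampBase (Multiplicative ℤ) lampShift

/-- Automaton number 942:
`a = σ(c,b)`, `b = (c,b)`, `c = (c,a)` (states `0 = a`, `1 = b`, `2 = c`). -/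
def A942 : BinAutomaton (Fin 3) :=
  mkAut3 ![2, 2, 2] ![1, 1, 0] ![true, false, false]

noncomputable def a : Equiv.Perm (List Bool) := A942.perm 0
noncomputable def b : Equiv.Perm (List Bool) := A942.perm 1
noncomputable def c : Equiv.Perm (List Bool) := A942.perm 2

/-!
Write `σ` for the root swap, so that `a = σ b`. By induction on `n`, the lamp `eₙ = bⁿ σ b⁻ⁿ`
has wreath recursion `eₙ = ((1, Eₙ), (1, Eₙ)) σ` with `Eₙ = eₙ₋₁ ⋯ e₀`; hence `σ` commutes with
every lamp, the lamps are commuting involutions, and `eₙ ↦ bⁿσb⁻ⁿ`, `t ↦ b` defines a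
homomorphism from `C₂ ≀ ℤ` onto `⟨a, b⟩`.

Reading a lamp configuration supported in `ℕ` as a polynomial over `𝔽₂`, the recursion says that
`1` acts as `σ` and `(X - 1) q` acts as `((1, q), (1, q))`. A configuration acting trivially is
therefore inactive at the root, i.e. divisible by `X - 1`, with a quotient that again acts
trivially; by degree it vanishes. Every nontrivial normal subgroup of `C₂ ≀ ℤ` contains a nonzero
configuration, which can be shifted into `ℕ`, so the homomorphism is injective.
-/

open Equiv Polynomial

namespace TreeAut

def pair : Perm (List Bool) × Perm (List Bool) →* Perm (List Bool) where
  toFun g :=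
    { toFun := fun | [] => [] | x :: w => x :: cond x (g.2 w) (g.1 w)
      invFun := fun | [] => [] | x :: w => x :: cond x (g.2.symm w) (g.1.symm w)
      left_inv := by rintro (_ | ⟨_ | _, w⟩) <;> simp
      right_inv := by rintro (_ | ⟨_ | _, w⟩) <;> simp }
  map_one' := Equiv.ext <| by rintro (_ | ⟨_ | _, w⟩) <;> rfl
  map_mul' g h := Equiv.ext <| by rintro (_ | ⟨_ | _, w⟩) <;> rfl

@[simp] lemma pair_apply_false (g : Perm (List Bool) × Perm (List Bool)) (w : List Bool) :
    pair g (false :: w) = false :: g.1 w := rfl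

@[simp] lemma pair_apply_true (g : Perm (List Bool) × Perm (List Bool)) (w : List Bool) :
    pair g (true :: w) = true :: g.2 w := rfl

lemma pair_injective : Function.Injective pair := by
  refine (injective_iff_map_eq_one _).2 fun g hg =>
    Prod.ext (Equiv.ext fun w => ?_) (Equiv.ext fun w => ?_)
  · simpa using congr($hg (false :: w))
  · simpa using congr($hg (true :: w))

def rootSwap : Perm (List Bool) where
  toFun := fun | [] => [] | x :: w => (!x) :: w
  invFun := fun | [] => [] | x :: w => (!x) :: w
  left_inv := by rintro (_ | ⟨x, w⟩) <;> simp
  right_inv := by rintro (_ | ⟨x, w⟩) <;> simp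

@[simp] lemma rootSwap_apply_cons (x : Bool) (w : List Bool) : rootSwap (x :: w) = (!x) :: w := rfl

@[simp] lemma rootSwap_mul_rootSwap : rootSwap * rootSwap = 1 :=
  Equiv.ext <| by rintro (_ | ⟨_ | _, w⟩) <;> rfl

@[simp] lemma rootSwap_inv : rootSwap⁻¹ = rootSwap := inv_eq_of_mul_eq_one_right rootSwap_mul_rootSwap

lemma rootSwap_mul_pair (g : Perm (List Bool) × Perm (List Bool)) :
    rootSwap * pair g = pair g.swap * rootSwap :=
  Equiv.ext <| by rintro (_ | ⟨_ | _, w⟩) <;> rfl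

lemma commute_rootSwap_pair_self (g : Perm (List Bool)) : Commute rootSwap (pair (g, g)) :=
  rootSwap_mul_pair (g, g)

lemma rootSwap_mul_pair_ne_one (g : Perm (List Bool) × Perm (List Bool)) : rootSwap * pair g ≠ 1 :=
  fun h => by simpa using congr($h [false])

def diagInr : Perm (List Bool) →* Perm (List Bool) where
  toFun g := pair (pair (1, g), pair (1, g))
  map_one' := by simp only [← Prod.one_eq_mk, map_one]
  map_mul' g h := by simp only [← map_mul, Prod.mk_mul_mk, mul_one]

lemma diagInr_apply (g : Perm (List Bool)) : diagInr g = pair (pair (1, g), pair (1, g)) := rfl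

lemma diagInr_injective : Function.Injective diagInr := by
  intro g h hgh
  have := congr(Prod.snd $(pair_injective hgh))
  simpa using congr(Prod.snd $(pair_injective this))

lemma commute_rootSwap_diagInr (g : Perm (List Bool)) : Commute rootSwap (diagInr g) :=
  commute_rootSwap_pair_self _

end TreeAut

namespace Polynomial

variable {R : Type*} [Semiring R]

noncomputable def toIntFinsupp : R[X] →+ ℤ →₀ R :=
  (Finsupp.mapDomain.addMonoidHom Nat.cast).comp
    (AddMonoidAlgebra.coeffAddEquiv.toAddMonoidHom.comp (toFinsuppIso R).toAddMonoidHom)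

@[simp] lemma toIntFinsupp_monomial (n : ℕ) (r : R) :
    toIntFinsupp (monomial n r) = Finsupp.single (n : ℤ) r := by
  simp [toIntFinsupp]

lemma exists_equivMapDomain_eq_toIntFinsupp (f : ℤ →₀ R) :
    ∃ n : ℕ, ∃ p : R[X], f.equivMapDomain (Equiv.addRight (n : ℤ)) = toIntFinsupp p := by
  set n := f.support.sup Int.natAbs
  set g := f.equivMapDomain (Equiv.addRight (n : ℤ))
  have hg : ↑g.support ⊆ Set.range ((↑) : ℕ → ℤ) := by
    intro i hi
    have hi' : i - n ∈ f.support := by simpa [g, sub_eq_add_neg] using hi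
    have : (i - n).natAbs ≤ n := Finset.le_sup (f := Int.natAbs) hi'
    exact ⟨i.toNat, by omega⟩
  refine ⟨n, ofFinsupp (.ofCoeff (g.comapDomain _ Nat.cast_injective.injOn)), ?_⟩
  exact (Finsupp.mapDomain_comapDomain _ Nat.cast_injective g hg).symm

theorem eq_zero_of_forall_mem_eq_mul {S : Set R[X]} {d : R[X]} (hd : d.Monic)
    (hdeg : d.natDegree ≠ 0) (h : ∀ p ∈ S, ∃ q ∈ S, p = d * q) {p : R[X]} (hp : p ∈ S) :
    p = 0 := by
  induction hn : p.natDegree using Nat.strong_induction_on generalizing p with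
  | _ n ih =>
    obtain ⟨q, hqS, rfl⟩ := h p hp
    by_cases hq : q = 0
    · rw [hq, mul_zero]
    · rw [hd.natDegree_mul' hq] at hn
      exact absurd (ih _ (by omega) hqS rfl) hq

end Polynomial

lemma ZMod.eq_zero_or_eq_one (r : ZMod 2) : r = 0 ∨ r = 1 := by
  revert r; decide

namespace Lamplighter

open SemidirectProduct

lemma lampShift_single (n : Multiplicative ℤ) (i : ℤ) (r : ZMod 2) :
    lampShift n (.ofAdd (Finsupp.single i r)) = .ofAdd (Finsupp.single (i + n.toAdd) r) :=
  congrArg Multiplicative.ofAdd (Finsupp.equivMapDomain_single _ _ _)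

lemma injective_of_injective_comp_inl {G : Type*} [Group G] (Φ : Lamplighter →* G)
    (h : Function.Injective (Φ.comp inl)) : Function.Injective Φ := by
  refine (injective_iff_map_eq_one Φ).2 fun x hx => ?_
  set δ : LampBase := .ofAdd (Finsupp.single 0 1)
  have hconj : x * inl δ * x⁻¹ = inl (lampShift x.right δ) :=
    calc x * inl δ * x⁻¹
        = inl x.left * (inr x.right * inl δ * (inr x.right)⁻¹) * (inl x.left)⁻¹ := by
          conv_lhs => rw [← inl_left_mul_inr_right x]
          group
      _ = inl (lampShift x.right δ) := by
          rw [← map_inv inr, ← inl_aut, ← map_inv, ← map_mul, ← map_mul, mul_inv_cancel_comm]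
  have hshift : lampShift x.right δ = δ := h <| by
    simp only [MonoidHom.comp_apply, ← hconj, map_mul, map_inv, hx, one_mul, inv_one, mul_one]
  have hright : x.right = 1 := by
    rw [lampShift_single, zero_add] at hshift
    exact toAdd_eq_zero.1 ((Finsupp.single_left_inj one_ne_zero).1 congr(Multiplicative.toAdd $hshift))
  have hx_inl : x = inl x.left := by simpa [hright] using (inl_left_mul_inr_right x).symm
  have hleft : x.left = 1 := h <| by simpa [← hx_inl] using hx
  exact SemidirectProduct.ext hleft hright

lemma injective_of_forall_toIntFinsupp {G : Type*} [Group G] (Φ : Lamplighter →* G)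
    (h : ∀ p : (ZMod 2)[X], Φ (inl (.ofAdd (toIntFinsupp p))) = 1 → p = 0) :
    Function.Injective Φ := by
  refine injective_of_injective_comp_inl Φ ((injective_iff_map_eq_one _).2 fun f hf => ?_)
  obtain ⟨n, p, hp⟩ := exists_equivMapDomain_eq_toIntFinsupp f.toAdd
  have hshift : lampShift (.ofAdd (n : ℤ)) f = .ofAdd (toIntFinsupp p) :=
    congrArg Multiplicative.ofAdd hp
  have hΦ : Φ (inl (lampShift (.ofAdd (n : ℤ)) f)) = 1 := by
    rw [inl_aut, map_mul, map_mul, ← MonoidHom.comp_apply Φ inl, hf, mul_one, ← map_mul,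
      ← map_mul inr, mul_inv_cancel, map_one, map_one]
  rw [h p (hshift ▸ hΦ), map_zero, ofAdd_zero] at hshift
  exact (map_eq_one_iff _ (MulEquiv.injective _)).1 hshift

end Lamplighter

namespace Automaton942

open TreeAut SemidirectProduct

lemma a_eq : a = rootSwap * pair (c, b) :=
  Equiv.ext <| by rintro (_ | ⟨_ | _, w⟩) <;> rfl

lemma b_eq : b = pair (c, b) :=
  Equiv.ext <| by rintro (_ | ⟨_ | _, w⟩) <;> rfl

lemma c_eq : c = pair (c, a) :=
  Equiv.ext <| by rintro (_ | ⟨_ | _, w⟩) <;> rfl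

lemma a_eq_rootSwap_mul_b : a = rootSwap * b := by rw [a_eq, ← b_eq]

lemma rootSwap_eq : rootSwap = a * b⁻¹ := by rw [a_eq_rootSwap_mul_b, mul_inv_cancel_right]

lemma conj_b_pair (g : Perm (List Bool) × Perm (List Bool)) :
    MulAut.conj b (pair g) = pair (MulAut.conj c g.1, MulAut.conj b g.2) := by
  simp only [MulAut.conj_apply]
  conv_lhs => rw [b_eq, ← map_inv, ← map_mul, ← map_mul]
  rfl

lemma conj_c_pair (g : Perm (List Bool) × Perm (List Bool)) :
    MulAut.conj c (pair g) = pair (MulAut.conj c g.1, MulAut.conj a g.2) := by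
  simp only [MulAut.conj_apply]
  conv_lhs => rw [c_eq, ← map_inv, ← map_mul, ← map_mul]
  rfl

lemma conj_b_diagInr {g : Perm (List Bool)} (hg : Commute rootSwap (MulAut.conj b g)) :
    MulAut.conj b (diagInr g) = diagInr (MulAut.conj b g) := by
  have hconj_a : MulAut.conj a g = MulAut.conj b g := by
    rw [a_eq_rootSwap_mul_b, map_mul, MulAut.mul_apply, MulAut.conj_apply, hg.eq, rootSwap_inv,
      mul_assoc, rootSwap_mul_rootSwap, mul_one]
  simp only [diagInr_apply, conj_b_pair, conj_c_pair, map_one, hconj_a]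

lemma c_mul_b_inv : c * b⁻¹ = pair (1, rootSwap) := by
  conv_lhs => rw [c_eq, b_eq]
  rw [← map_inv, ← map_mul, Prod.inv_mk, Prod.mk_mul_mk, mul_inv_cancel, ← rootSwap_eq]

lemma conj_b_rootSwap : MulAut.conj b rootSwap = diagInr rootSwap * rootSwap := by
  have hbc : b * c⁻¹ = pair (1, rootSwap) := by
    rw [← inv_inv b, ← mul_inv_rev, c_mul_b_inv, ← map_inv, Prod.inv_mk, inv_one, rootSwap_inv]
  calc MulAut.conj b rootSwap = pair (c, b) * (rootSwap * pair (c⁻¹, b⁻¹)) := by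
        rw [MulAut.conj_apply, mul_assoc, ← Prod.inv_mk, map_inv, ← b_eq]
    _ = pair (c * b⁻¹, b * c⁻¹) * rootSwap := by
        rw [rootSwap_mul_pair, ← mul_assoc, ← map_mul]; rfl
    _ = diagInr rootSwap * rootSwap := by rw [c_mul_b_inv, hbc, diagInr_apply]

noncomputable def lamp (n : ℤ) : Perm (List Bool) := MulAut.conj (b ^ n) rootSwap

@[simp] lemma lamp_zero : lamp 0 = rootSwap := by simp [lamp]

lemma lamp_add (m n : ℤ) : lamp (m + n) = MulAut.conj (b ^ n) (lamp m) := by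
  rw [lamp, lamp, ← MulAut.mul_apply, ← map_mul, ← zpow_add, add_comm]

lemma lamp_mul_self (n : ℤ) : lamp n * lamp n = 1 := by
  rw [lamp, ← map_mul, rootSwap_mul_rootSwap, map_one]

lemma lamp_mem_closure (n : ℤ) : lamp n ∈ Subgroup.closure {a, b} := by
  have hb : b ∈ Subgroup.closure {a, b} := Subgroup.subset_closure (by simp)
  have ha : a ∈ Subgroup.closure {a, b} := Subgroup.subset_closure (by simp)
  rw [lamp, MulAut.conj_apply, rootSwap_eq]
  exact mul_mem (mul_mem (zpow_mem hb n) (mul_mem ha (inv_mem hb))) (inv_mem (zpow_mem hb n))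

noncomputable def lampProd : ℕ → Perm (List Bool)
  | 0 => 1
  | n + 1 => lamp n * lampProd n

lemma conj_b_lampProd_mul_rootSwap (n : ℕ) :
    MulAut.conj b (lampProd n) * rootSwap = lampProd (n + 1) := by
  induction n with
  | zero => simp [lampProd]
  | succ n ih =>
    rw [lampProd, map_mul, mul_assoc, ih, ← zpow_one b, ← lamp_add]
    rfl

/-- The two parts are proved together: the conjugation step `conj_b_diagInr` needs `rootSwap` to
commute with the product of the lamps found so far. -/
lemma lamp_natCast_eq_and_commute (n : ℕ) :
    lamp n = diagInr (lampProd n) * rootSwap ∧ Commute rootSwap (lampProd n) := by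
  induction n with
  | zero => simp [lampProd]
  | succ n ih =>
    obtain ⟨hlamp, hcomm⟩ := ih
    have hcomm_succ : Commute rootSwap (lampProd (n + 1)) := by
      refine Commute.mul_right ?_ hcomm
      rw [hlamp]
      exact (commute_rootSwap_diagInr _).mul_right (Commute.refl _)
    refine ⟨?_, hcomm_succ⟩
    have hconj : Commute rootSwap (MulAut.conj b (lampProd n)) := by
      have := (conj_b_lampProd_mul_rootSwap n ▸ hcomm_succ).mul_right (Commute.refl rootSwap)
      rwa [mul_assoc, rootSwap_mul_rootSwap, mul_one] at this
    calc lamp (n + 1 : ℕ) = MulAut.conj b (lamp n) := by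
          push_cast; rw [lamp_add, zpow_one]
      _ = diagInr (MulAut.conj b (lampProd n)) * (diagInr rootSwap * rootSwap) := by
          rw [hlamp, map_mul, conj_b_diagInr hconj, conj_b_rootSwap]
      _ = diagInr (lampProd (n + 1)) * rootSwap := by
          rw [← conj_b_lampProd_mul_rootSwap, map_mul, mul_assoc]

lemma lamp_natCast_succ (n : ℕ) : lamp (n + 1) = diagInr (lamp n) * lamp n := by
  have h := (lamp_natCast_eq_and_commute (n + 1)).1
  rw [Nat.cast_succ, lampProd, map_mul, mul_assoc, ← (lamp_natCast_eq_and_commute n).1] at h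
  exact h

lemma commute_rootSwap_lamp (n : ℤ) : Commute rootSwap (lamp n) := by
  have hnat (k : ℕ) : Commute rootSwap (lamp k) := by
    rw [(lamp_natCast_eq_and_commute k).1]
    exact (commute_rootSwap_diagInr _).mul_right (Commute.refl _)
  obtain ⟨k, rfl | rfl⟩ := Int.eq_nat_or_neg n
  · exact hnat k
  · have := (hnat k).symm.map (MulAut.conj (b ^ (-k : ℤ)))
    rwa [← lamp_add, add_neg_cancel, lamp_zero] at this

lemma commute_lamp_lamp (m n : ℤ) : Commute (lamp m) (lamp n) := by
  have := (commute_rootSwap_lamp (n - m)).map (MulAut.conj (b ^ m))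
  rwa [← lamp_add, sub_add_cancel] at this

noncomputable def lampGroup : Subgroup (Perm (List Bool)) := Subgroup.closure (Set.range lamp)

instance : IsMulCommutative lampGroup :=
  Subgroup.isMulCommutative_closure <| by
    rintro _ ⟨m, rfl⟩ _ ⟨n, rfl⟩
    exact commute_lamp_lamp m n

open scoped IsMulCommutative in
noncomputable def lampHom : LampBase →* Perm (List Bool) :=
  lampGroup.subtype.comp <| AddMonoidHom.toMultiplicativeLeft <| Finsupp.liftAddHom fun n =>
    ZMod.lift 2 ⟨zmultiplesHom _ (.ofMul ⟨lamp n, Subgroup.subset_closure ⟨n, rfl⟩⟩), by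
      simp only [zmultiplesHom_apply, Nat.cast_ofNat, two_zsmul, ← ofMul_mul]
      exact congrArg Additive.ofMul (Subtype.ext (lamp_mul_self n))⟩

lemma lampHom_single_one (n : ℤ) : lampHom (.ofAdd (Finsupp.single n 1)) = lamp n := by
  simp only [lampHom, MonoidHom.comp_apply, AddMonoidHom.toMultiplicativeLeft_apply_apply,
    toAdd_ofAdd, Finsupp.liftAddHom_apply_single]
  rw [← Int.cast_one, ZMod.lift_coe]
  simp

lemma lampHom_lampShift (g : Multiplicative ℤ) (f : LampBase) :
    lampHom (lampShift g f) = MulAut.conj (b ^ g.toAdd) (lampHom f) := by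
  induction f using Multiplicative.rec with | ofAdd f => ?_
  induction f using Finsupp.induction_linear with
  | zero => simp
  | add f₁ f₂ h₁ h₂ => simp only [ofAdd_add, map_mul, h₁, h₂]
  | single i r =>
    rw [Lamplighter.lampShift_single]
    obtain rfl | rfl := ZMod.eq_zero_or_eq_one r
    · simp
    · rw [lampHom_single_one, lampHom_single_one, lamp_add]

noncomputable def lamplighterHom : Lamplighter →* Perm (List Bool) :=
  lift lampHom (zpowersHom _ b) fun g => MonoidHom.ext (lampHom_lampShift g)

lemma lampHom_toIntFinsupp_X_sub_C_mul (q : (ZMod 2)[X]) :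
    lampHom (.ofAdd (toIntFinsupp ((X - C 1) * q))) =
      diagInr (lampHom (.ofAdd (toIntFinsupp q))) := by
  induction q using Polynomial.induction_on' with
  | add p q hp hq => simp only [mul_add, map_add, ofAdd_add, map_mul, hp, hq]
  | monomial n r =>
    obtain rfl | rfl := ZMod.eq_zero_or_eq_one r
    · simp
    · have : (X - C 1) * monomial n (1 : ZMod 2) = monomial (n + 1) 1 - monomial n 1 := by
        rw [sub_mul, X_mul_monomial, C_mul_monomial, one_mul]
      rw [this, map_sub, ofAdd_sub, _root_.map_div, toIntFinsupp_monomial, toIntFinsupp_monomial,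
        lampHom_single_one, lampHom_single_one, Nat.cast_succ, lamp_natCast_succ,
        mul_div_cancel_right]

lemma exists_eq_X_sub_C_mul_of_lampHom_eq_one {p : (ZMod 2)[X]}
    (hp : lampHom (.ofAdd (toIntFinsupp p)) = 1) :
    ∃ q, lampHom (.ofAdd (toIntFinsupp q)) = 1 ∧ p = (X - C 1) * q := by
  have hdiv := modByMonic_add_div p (X - C (1 : ZMod 2))
  set q := p /ₘ (X - C 1)
  rw [modByMonic_X_sub_C_eq_C_eval] at hdiv
  rw [← hdiv, map_add, ofAdd_add, map_mul, lampHom_toIntFinsupp_X_sub_C_mul] at hp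
  obtain h | h := ZMod.eq_zero_or_eq_one (p.eval 1)
  · rw [h, map_zero, map_zero, ofAdd_zero, map_one, one_mul,
      ← map_one diagInr] at hp
    refine ⟨q, diagInr_injective hp, ?_⟩
    rw [← hdiv, h, map_zero, zero_add]
  · rw [h, ← monomial_zero_left, toIntFinsupp_monomial, lampHom_single_one, Nat.cast_zero,
      lamp_zero, diagInr_apply] at hp
    exact absurd hp (rootSwap_mul_pair_ne_one _)

lemma lamplighterHom_injective : Function.Injective lamplighterHom :=
  Lamplighter.injective_of_forall_toIntFinsupp _ fun _ hp =>
    eq_zero_of_forall_mem_eq_mul (S := {p | lampHom (.ofAdd (toIntFinsupp p)) = 1})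
      (monic_X_sub_C 1) (by rw [natDegree_X_sub_C]; exact one_ne_zero)
      (fun _ => exists_eq_X_sub_C_mul_of_lampHom_eq_one) hp

lemma lamplighterHom_range : lamplighterHom.range = Subgroup.closure {a, b} := by
  have hb : lamplighterHom (inr (.ofAdd 1)) = b := by simp [lamplighterHom]
  refine le_antisymm ?_ ((Subgroup.closure_le _).2 ?_)
  · rintro _ ⟨x, rfl⟩
    rw [← inl_left_mul_inr_right x, map_mul, lamplighterHom, lift_inl, lift_inr]
    have hlamps : lampGroup ≤ Subgroup.closure {a, b} :=
      (Subgroup.closure_le _).2 (Set.range_subset_iff.2 lamp_mem_closure)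
    exact mul_mem (hlamps (Subtype.prop _)) (zpow_mem (Subgroup.subset_closure (by simp)) _)
  · rintro _ (rfl | rfl)
    · refine ⟨inl (.ofAdd (Finsupp.single 0 1)) * inr (.ofAdd 1), ?_⟩
      rw [map_mul, hb, lamplighterHom, lift_inl, lampHom_single_one, lamp_zero, a_eq_rootSwap_mul_b]
    · exact ⟨_, hb⟩

end Automaton942

/-- In the group generated by automaton 942, the subgroup generated by `a` and
`b` is isomorphic to the lamplighter group `C₂ ≀ ℤ`; in particular `G₉₄₂`
contains the lamplighter group as a subgroup. -/
theorem automaton942_group_contains_lamplighter :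
    Nonempty (↥(Subgroup.closure {a, b}) ≃* Lamplighter) ∧
    ∃ H : Subgroup (Equiv.Perm (List Bool)),
      H ≤ Subgroup.closure {a, b, c} ∧ Nonempty (↥H ≃* Lamplighter) := by
  have e : ↥(Subgroup.closure {a, b}) ≃* Lamplighter :=
    ((MonoidHom.ofInjective Automaton942.lamplighterHom_injective).trans
      (MulEquiv.subgroupCongr Automaton942.lamplighterHom_range)).symm
  exact ⟨⟨e⟩, _, Subgroup.closure_mono (by simp [Set.insert_subset_iff]), ⟨e⟩⟩
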